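/- Let a_0, a_1, a_2, ... be i.i.d. real standard Gaussian random variables. Then for every integer n ≥ 1, the largest root modulus x_n^(n) of the random polynomial P_n(z) = ∑_{k=0}^n a_k z^k (whose complex roots z_1^(n), ..., z_n^(n) are counted with multiplicity) satisfies 𝔼[x_n^(n)] = ∞. -/

import Mathlib

open MeasureTheory ProbabilityTheory Polynomial Filter

/-- The random Kac polynomial `P_n(z) = ∑_{k=0}^n a_k z^k`. -/
noncomputable def kacPoly {Ω : Type*} (a : ℕ → Ω → ℂ) (n : ℕ) (ω : Ω) : Polynomial ℂ :=
  ∑ k ∈ Finset.range (n + 1), Polynomial.C (a k ω) * Polynomial.X ^ k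

/-- The smallest modulus of a root of a complex polynomial. -/
noncomputable def minRootMod (p : Polynomial ℂ) : ℝ :=
  sInf ((fun z : ℂ => ‖z‖) '' {z : ℂ | z ∈ p.roots})

/-- The largest modulus of a root of a complex polynomial. -/
noncomputable def maxRootMod (p : Polynomial ℂ) : ℝ :=
  sSup ((fun z : ℂ => ‖z‖) '' {z : ℂ | z ∈ p.roots})

/-!
By Vieta's formula `a_{n-1} = -a_n (z_1 + ⋯ + z_n)`, so `|a_{n-1}| ≤ n |a_n| x_n^(n)`, i.e.
`n x_n^(n) ≥ |a_{n-1}| / |a_n|`. By independence the mean of the right-hand side is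
`𝔼|a_{n-1}| · 𝔼[1/|a_n|]`: the first factor is positive, and the second is infinite because the
Gaussian density is bounded below near `0` while `1/x` is not integrable at `0`.
-/

open Set
open scoped ENNReal NNReal

lemma norm_le_maxRootMod {p : ℂ[X]} {z : ℂ} (hz : z ∈ p.roots) : ‖z‖ ≤ maxRootMod p :=
  le_csSup ((p.roots.toFinset.finite_toSet.image _).subset
    (image_mono fun _ hw => Multiset.mem_toFinset.2 hw)).bddAbove ⟨z, hz, rfl⟩

lemma norm_nextCoeff_le_natDegree_mul_maxRootMod (p : ℂ[X]) :
    ‖p.nextCoeff‖ ≤ p.natDegree * ‖p.leadingCoeff‖ * maxRootMod p := by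
  have hp := IsAlgClosed.splits p
  have hsum : ‖p.roots.sum‖ ≤ p.roots.card • maxRootMod p :=
    (norm_multiset_sum_le _).trans <| by
      simpa using Multiset.sum_le_card_nsmul (p.roots.map (‖·‖)) _ <|
        Multiset.forall_mem_map_iff.2 fun _ => norm_le_maxRootMod
  calc ‖p.nextCoeff‖ = ‖p.leadingCoeff‖ * ‖p.roots.sum‖ := by
        rw [hp.nextCoeff_eq_neg_sum_roots_mul_leadingCoeff, norm_mul, norm_neg]
    _ ≤ ‖p.leadingCoeff‖ * (p.roots.card • maxRootMod p) := by gcongr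
    _ = p.natDegree * ‖p.leadingCoeff‖ * maxRootMod p := by
        rw [hp.natDegree_eq_card_roots, nsmul_eq_mul]; ring

section KacPoly

variable {Ω : Type*} (a : ℕ → Ω → ℂ) (n : ℕ) (ω : Ω)

lemma coeff_kacPoly (j : ℕ) : (kacPoly a n ω).coeff j = if j ≤ n then a j ω else 0 := by
  simp [kacPoly, coeff_C_mul, coeff_X_pow]

variable {a n ω}

lemma natDegree_kacPoly (h : a n ω ≠ 0) : (kacPoly a n ω).natDegree = n :=
  natDegree_eq_of_le_of_coeff_ne_zero
    ((natDegree_le_iff_coeff_eq_zero).2 fun j hj => by simp [coeff_kacPoly, not_le.2 hj])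
    (by simpa [coeff_kacPoly] using h)

lemma leadingCoeff_kacPoly (h : a n ω ≠ 0) : (kacPoly a n ω).leadingCoeff = a n ω := by
  simp [leadingCoeff, natDegree_kacPoly h, coeff_kacPoly]

lemma nextCoeff_kacPoly (hn : 1 ≤ n) (h : a n ω ≠ 0) :
    (kacPoly a n ω).nextCoeff = a (n - 1) ω := by
  rw [nextCoeff_of_natDegree_pos (by rwa [natDegree_kacPoly h]), natDegree_kacPoly h, coeff_kacPoly,
    if_pos (Nat.sub_le n 1)]

end KacPoly

lemma abs_mul_inv_abs_le_maxRootMod_kacPoly {Ω : Type*} {a : ℕ → Ω → ℝ} {n : ℕ} {ω : Ω}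
    (hn : 1 ≤ n) (h : a n ω ≠ 0) :
    |a (n - 1) ω| * |a n ω|⁻¹ ≤ n * maxRootMod (kacPoly (fun k ω => (a k ω : ℂ)) n ω) := by
  have h' : (a n ω : ℂ) ≠ 0 := Complex.ofReal_ne_zero.2 h
  have hvieta := norm_nextCoeff_le_natDegree_mul_maxRootMod (kacPoly (fun k ω => (a k ω : ℂ)) n ω)
  rw [nextCoeff_kacPoly hn h', natDegree_kacPoly h', leadingCoeff_kacPoly h'] at hvieta
  simp only [Complex.norm_real, Real.norm_eq_abs] at hvieta
  rw [← div_eq_mul_inv, div_le_iff₀ (abs_pos.2 h)]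
  linarith

lemma lintegral_ofReal_inv_Ioo_zero_one : ∫⁻ x in Ioo (0 : ℝ) 1, ENNReal.ofReal x⁻¹ = ∞ := by
  by_contra hfin
  have hint : IntegrableOn (fun x : ℝ => x⁻¹) (Ioo 0 1) :=
    (lintegral_ofReal_ne_top_iff_integrable measurable_inv.aestronglyMeasurable
      (ae_restrict_of_forall_mem measurableSet_Ioo fun x hx => inv_nonneg.2 hx.1.le)).1 hfin
  have := intervalIntegrable_iff_integrableOn_Ioo_of_le zero_le_one |>.2 hint
  simp at this

lemma lintegral_ofReal_inv_abs_gaussianReal (m : ℝ) {v : ℝ≥0} (hv : v ≠ 0) :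
    ∫⁻ x, ENNReal.ofReal |x|⁻¹ ∂gaussianReal m v = ∞ := by
  obtain ⟨x₀, -, hmin⟩ := isCompact_Icc.exists_isMinOn (nonempty_Icc.2 zero_le_one)
    (ENNReal.continuous_ofReal.comp (by unfold gaussianPDFReal; fun_prop :
      Continuous (gaussianPDFReal m v))).continuousOn
  have hc : gaussianPDF m v x₀ ≠ 0 := (gaussianPDF_pos m hv x₀).ne'
  rw [gaussianReal_of_var_ne_zero m hv,
    lintegral_withDensity_eq_lintegral_mul _ (measurable_gaussianPDF m v) (by fun_prop), eq_top_iff]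
  calc ∞ = gaussianPDF m v x₀ * ∫⁻ x in Ioo 0 1, ENNReal.ofReal x⁻¹ := by
        rw [lintegral_ofReal_inv_Ioo_zero_one, ENNReal.mul_top hc]
    _ = ∫⁻ x in Ioo 0 1, gaussianPDF m v x₀ * ENNReal.ofReal |x|⁻¹ := by
        rw [← lintegral_const_mul _ (by fun_prop)]
        exact setLIntegral_congr_fun measurableSet_Ioo fun x hx => by rw [abs_of_pos hx.1]
    _ ≤ ∫⁻ x in Ioo 0 1, gaussianPDF m v x * ENNReal.ofReal |x|⁻¹ :=
        setLIntegral_mono (by fun_prop) fun x hx => by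
          gcongr
          exact hmin (Ioo_subset_Icc_self hx)
    _ ≤ _ := setLIntegral_le_lintegral _ _

lemma lintegral_ofReal_abs_ne_zero (ν : Measure ℝ) [NeZero ν] [NullSingletonClass ν] :
    ∫⁻ x, ENNReal.ofReal |x| ∂ν ≠ 0 := by
  rw [Ne, lintegral_eq_zero_iff (by fun_prop)]
  intro h
  obtain ⟨x, hx0, hx⟩ := (h.and (ν.ae_ne 0)).exists
  simp_all

lemma lintegral_comp_mul_comp_of_indepFun {Ω β γ : Type*} [MeasurableSpace Ω] [MeasurableSpace β]
    [MeasurableSpace γ] {μ : Measure Ω} {X : Ω → β} {Y : Ω → γ} (hX : Measurable X)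
    (hY : Measurable Y) (hXY : IndepFun X Y μ) {f : β → ℝ≥0∞} {g : γ → ℝ≥0∞}
    (hf : Measurable f) (hg : Measurable g) :
    ∫⁻ ω, f (X ω) * g (Y ω) ∂μ = (∫⁻ x, f x ∂μ.map X) * ∫⁻ y, g y ∂μ.map Y := by
  rw [lintegral_map hf hX, lintegral_map hg hY]
  exact lintegral_mul_eq_lintegral_mul_lintegral_of_indepFun (hf.comp hX) (hg.comp hY)
    (hXY.comp hf hg)

theorem maxRootMod_infinite_mean_real_gaussian_general
    {Ω : Type*} [MeasurableSpace Ω] (μ : Measure Ω)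
    (a : ℕ → Ω → ℝ) (hmeas : ∀ k, Measurable (a k))
    (hindep : iIndepFun a μ)
    (hgauss : ∀ k, μ.map (a k) = gaussianReal 0 1) :
    ∀ n : ℕ, 1 ≤ n →
      ∫⁻ ω, ENNReal.ofReal (maxRootMod (kacPoly (fun k ω => (a k ω : ℂ)) n ω)) ∂μ = ⊤ := by
  intro n hn
  have := nullSingletonClass_gaussianReal (μ := 0) one_ne_zero
  have hlead : ∀ᵐ ω ∂μ, a n ω ≠ 0 :=
    ae_of_ae_map (hmeas n).aemeasurable (hgauss n ▸ (gaussianReal 0 1).ae_ne 0)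
  have hbound : ∀ᵐ ω ∂μ, ENNReal.ofReal |a (n - 1) ω| * ENNReal.ofReal |a n ω|⁻¹ ≤
      n * ENNReal.ofReal (maxRootMod (kacPoly (fun k ω => (a k ω : ℂ)) n ω)) := by
    filter_upwards [hlead] with ω hω
    rw [← ENNReal.ofReal_mul (abs_nonneg _), ← ENNReal.ofReal_natCast,
      ← ENNReal.ofReal_mul n.cast_nonneg]
    exact ENNReal.ofReal_le_ofReal (abs_mul_inv_abs_le_maxRootMod_kacPoly hn hω)
  have hratio : ∫⁻ ω, ENNReal.ofReal |a (n - 1) ω| * ENNReal.ofReal |a n ω|⁻¹ ∂μ = ∞ := by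
    rw [lintegral_comp_mul_comp_of_indepFun (hmeas _) (hmeas _)
      (hindep.indepFun (show n - 1 ≠ n by omega)) (f := fun x => ENNReal.ofReal |x|)
      (g := fun y => ENNReal.ofReal |y|⁻¹) (by fun_prop) (by fun_prop), hgauss, hgauss,
      lintegral_ofReal_inv_abs_gaussianReal 0 one_ne_zero]
    exact ENNReal.mul_top (lintegral_ofReal_abs_ne_zero _)
  have htop : ∞ ≤ n * ∫⁻ ω, ENNReal.ofReal (maxRootMod (kacPoly (fun k ω => (a k ω : ℂ)) n ω)) ∂μ :=
    calc ∞ = _ := hratio.symm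
      _ ≤ _ := lintegral_mono_ae hbound
      _ = _ := lintegral_const_mul' _ _ (ENNReal.natCast_ne_top n)
  by_contra hfin
  exact ENNReal.mul_ne_top (ENNReal.natCast_ne_top n) hfin (top_unique htop)

/-- For i.i.d. real standard Gaussian coefficients, the largest root
modulus of the Kac polynomial `P_n` (viewed as a complex polynomial) has infinite mean for
every `n ≥ 1`. -/
theorem maxRootMod_infinite_mean_real_gaussian
    {Ω : Type*} [MeasurableSpace Ω] (μ : Measure Ω) [IsProbabilityMeasure μ]
    (a : ℕ → Ω → ℝ) (hmeas : ∀ k, Measurable (a k))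
    (hindep : iIndepFun a μ)
    (hgauss : ∀ k, μ.map (a k) = gaussianReal 0 1) :
    ∀ n : ℕ, 1 ≤ n →
      ∫⁻ ω, ENNReal.ofReal (maxRootMod (kacPoly (fun k ω => (a k ω : ℂ)) n ω)) ∂μ = ⊤ :=
  maxRootMod_infinite_mean_real_gaussian_general μ a hmeas hindep hgauss
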